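/- If the deletion weight satisfies γ ≤ δ (in particular when insertion/deletion are allowed) and the target language is prefix-closed, then the edit distance to the target language is contractible whenever min{α, β, γ} ≤ δ: for all words w and letters a, the weighted edit distance from w to P(L) is at most the weighted edit distance from w ++ [a] to P(L). As a concrete special case: with all weights equal (unweighted Levenshtein-Damerau distance), the edit distance d(w) from w to a prefix-closed language satisfies d(w) ≤ d(w ++ [a]) for all w and a. -/

import Mathlib

open scoped ENNReal

/-- A single edit operation, with its cost: substitution (α), insertion (β),
deletion (γ), transposition of adjacent letters (δ). -/
inductive EditStep {V : Type*} (α β γ δ : ℝ≥0∞) : List V → List V → ℝ≥0∞ → Prop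
  | subst (u v : List V) (a b : V) : EditStep α β γ δ (u ++ a :: v) (u ++ b :: v) α
  | insert (u v : List V) (a : V) : EditStep α β γ δ (u ++ v) (u ++ a :: v) β
  | delete (u v : List V) (a : V) : EditStep α β γ δ (u ++ a :: v) (u ++ v) γ
  | transpose (u v : List V) (a b : V) :
      EditStep α β γ δ (u ++ a :: b :: v) (u ++ b :: a :: v) δ

/-- A finite sequence of edit operations, with its total cost. -/
inductive Edits {V : Type*} (α β γ δ : ℝ≥0∞) : List V → List V → ℝ≥0∞ → Prop
  | refl (w : List V) : Edits α β γ δ w w 0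
  | step {w₁ w₂ w₃ : List V} {c c' : ℝ≥0∞} :
      EditStep α β γ δ w₁ w₂ c → Edits α β γ δ w₂ w₃ c' → Edits α β γ δ w₁ w₃ (c + c')

/-- Weighted edit distance from a word to a language: the infimum of the total
cost of edit sequences transforming the word into a member of the language
(`∞` if there is no such sequence). -/
noncomputable def editDist {V : Type*} (α β γ δ : ℝ≥0∞) (L : Set (List V))
    (w : List V) : ℝ≥0∞ :=
  sInf {c | ∃ w' ∈ L, Edits α β γ δ w w' c}

def pclose {V : Type*} (L : Set (List V)) : Set (List V) := {w | ∃ u, w ++ u ∈ L}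

def prefixClosed {V : Type*} (L : Set (List V)) : Prop :=
  ∀ w ∈ L, ∀ u : List V, u <+: w → u ∈ L

/-!
Any edit sequence taking `w` to `w'` can be replayed on a prefix `z` of `w`, at no greater cost,
so that it ends at a prefix of `w'`: operations to the right of the cut are dropped, those to its
left are kept, and those at the cut shrink to the same kind of operation. The one exception is a
transposition whose second letter lies beyond the cut; on `z` it becomes a substitution, insertion
or deletion, whichever is cheapest, and `min α (min β γ) ≤ δ` is exactly what pays for it. Hence the
distance to a prefix-closed language is monotone along prefixes, and `P(L)` is prefix-closed.
-/

section

variable {V : Type*} {α β γ δ : ℝ≥0∞}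

lemma Edits.trans {x y z : List V} {c c' : ℝ≥0∞}
    (h : Edits α β γ δ x y c) (h' : Edits α β γ δ y z c') :
    Edits α β γ δ x z (c + c') := by
  induction h with
  | refl => simpa using h'
  | step s _ ih => rw [add_assoc]; exact .step s (ih h')

lemma Edits.single {x y : List V} {c : ℝ≥0∞} (h : EditStep α β γ δ x y c) :
    Edits α β γ δ x y c := by
  simpa using Edits.step h (.refl y)

lemma EditStep.append_left (u : List V) {x y : List V} {c : ℝ≥0∞}
    (h : EditStep α β γ δ x y c) : EditStep α β γ δ (u ++ x) (u ++ y) c := by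
  cases h with
  | subst u' v a b => simpa using EditStep.subst (u ++ u') v a b
  | insert u' v a => simpa using EditStep.insert (u ++ u') v a
  | delete u' v a => simpa using EditStep.delete (u ++ u') v a
  | transpose u' v a b => simpa using EditStep.transpose (u ++ u') v a b

lemma Edits.append_left (u : List V) {x y : List V} {c : ℝ≥0∞}
    (h : Edits α β γ δ x y c) : Edits α β γ δ (u ++ x) (u ++ y) c := by
  induction h with
  | refl => exact .refl _
  | step s _ ih => exact .step (s.append_left u) ih

lemma List.prefix_append_cases {z u s : List V} (h : z <+: u ++ s) :
    z <+: u ∨ ∃ s', s' <+: s ∧ z = u ++ s' := by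
  rcases List.prefix_or_prefix_of_prefix h (List.prefix_append u s) with hzu | ⟨s', rfl⟩
  · exact .inl hzu
  · exact .inr ⟨s', (List.prefix_append_right_inj u).mp h, rfl⟩

def EditsToPrefix (α β γ δ : ℝ≥0∞) (z y : List V) (c : ℝ≥0∞) : Prop :=
  ∃ z' c', c' ≤ c ∧ Edits α β γ δ z z' c' ∧ z' <+: y

namespace EditsToPrefix

lemma of_prefix {z y : List V} (h : z <+: y) (c : ℝ≥0∞) : EditsToPrefix α β γ δ z y c :=
  ⟨z, 0, zero_le, .refl z, h⟩

lemma of_editStep {z z' y : List V} {c c' : ℝ≥0∞} (h : EditStep α β γ δ z z' c')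
    (hp : z' <+: y) (hc : c' ≤ c) : EditsToPrefix α β γ δ z y c :=
  ⟨z', c', hc, .single h, hp⟩

lemma append_left (u : List V) {z y : List V} {c : ℝ≥0∞} (h : EditsToPrefix α β γ δ z y c) :
    EditsToPrefix α β γ δ (u ++ z) (u ++ y) c := by
  obtain ⟨z', c', hc, e, hp⟩ := h
  exact ⟨u ++ z', c', hc, e.append_left u, (List.prefix_append_right_inj u).mpr hp⟩

lemma trans {z y w : List V} {c₁ c₂ : ℝ≥0∞} (h : EditsToPrefix α β γ δ z y c₁)
    (h' : ∀ z', z' <+: y → EditsToPrefix α β γ δ z' w c₂) :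
    EditsToPrefix α β γ δ z w (c₁ + c₂) := by
  obtain ⟨z₁, c₁', hc₁, e₁, hp₁⟩ := h
  obtain ⟨z₂, c₂', hc₂, e₂, hp₂⟩ := h' z₁ hp₁
  exact ⟨z₂, c₁' + c₂', add_le_add hc₁ hc₂, e₁.trans e₂, hp₂⟩

lemma of_forall_prefix_append {u s t : List V} {c : ℝ≥0∞}
    (h : ∀ s', s' <+: s → EditsToPrefix α β γ δ s' t c) (z : List V) (hz : z <+: u ++ s) :
    EditsToPrefix α β γ δ z (u ++ t) c := by
  rcases List.prefix_append_cases hz with hzu | ⟨s', hs', rfl⟩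
  · exact of_prefix (hzu.trans (List.prefix_append u t)) c
  · exact (h s' hs').append_left u

end EditsToPrefix

open EditsToPrefix

lemma editsToPrefix_transpose (hmin : min α (min β γ) ≤ δ) (a b : V) {s v : List V}
    (hs : s <+: a :: b :: v) : EditsToPrefix α β γ δ s (b :: a :: v) δ := by
  obtain rfl | ⟨t, rfl, ht⟩ := List.prefix_cons_iff.mp hs
  · exact of_prefix List.nil_prefix δ
  obtain rfl | ⟨r, rfl, hr⟩ := List.prefix_cons_iff.mp ht
  · -- the transposition straddles the end of the prefix `[a]`
    rcases min_le_iff.mp hmin with hα | hβγ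
    · exact of_editStep (.subst [] [] a b) (by simp) hα
    rcases min_le_iff.mp hβγ with hβ | hγ
    · exact of_editStep (.insert [] [a] b) (by simp) hβ
    · exact of_editStep (.delete [] [] a) List.nil_prefix hγ
  · exact of_editStep (.transpose [] r a b) (by simp [hr]) le_rfl

lemma EditStep.editsToPrefix (hmin : min α (min β γ) ≤ δ) {y y' : List V} {c : ℝ≥0∞}
    (h : EditStep α β γ δ y y' c) (z : List V) (hz : z <+: y) :
    EditsToPrefix α β γ δ z y' c := by
  cases h with
  | subst u v a b =>
    refine of_forall_prefix_append (fun s hs => ?_) z hz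
    obtain rfl | ⟨t, rfl, ht⟩ := List.prefix_cons_iff.mp hs
    · exact of_prefix List.nil_prefix α
    · exact of_editStep (.subst [] t a b) (by simp [ht]) le_rfl
  | insert u v a =>
    exact of_forall_prefix_append (fun s hs =>
      of_editStep (.insert [] s a) (by simp [hs]) le_rfl) z hz
  | delete u v a =>
    refine of_forall_prefix_append (fun s hs => ?_) z hz
    obtain rfl | ⟨t, rfl, ht⟩ := List.prefix_cons_iff.mp hs
    · exact of_prefix List.nil_prefix γ
    · exact of_editStep (.delete [] t a) (by simpa using ht) le_rfl
  | transpose u v a b =>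
    exact of_forall_prefix_append (fun _ hs => editsToPrefix_transpose hmin a b hs) z hz

lemma Edits.editsToPrefix (hmin : min α (min β γ) ≤ δ) {y w : List V} {c : ℝ≥0∞}
    (h : Edits α β γ δ y w c) (z : List V) (hz : z <+: y) :
    EditsToPrefix α β γ δ z w c := by
  induction h generalizing z with
  | refl => exact .of_prefix hz 0
  | step s _ ih => exact (s.editsToPrefix hmin z hz).trans ih

lemma editDist_mono_of_prefix (hmin : min α (min β γ) ≤ δ) {S : Set (List V)}
    (hS : prefixClosed S) {w z : List V} (hz : z <+: w) :
    editDist α β γ δ S z ≤ editDist α β γ δ S w := by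
  refine le_sInf ?_
  rintro c ⟨w', hw', he⟩
  obtain ⟨z', c', hc, e, hp⟩ := he.editsToPrefix hmin z hz
  exact le_trans (sInf_le ⟨z', hS w' hw' z' hp, e⟩) hc

lemma prefixClosed_pclose (L : Set (List V)) : prefixClosed (pclose L) := by
  rintro w ⟨u, hu⟩ z ⟨r, rfl⟩
  exact (⟨r ++ u, by simpa using hu⟩ : ∃ u', z ++ u' ∈ L)

end

theorem editDist_contractible {V : Type*} (α β γ δ : ℝ≥0∞)
    (hmin : min α (min β γ) ≤ δ) :
    (∀ (L : Set (List V)) (w : List V) (a : V),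
      editDist α β γ δ (pclose L) w ≤ editDist α β γ δ (pclose L) (w ++ [a])) ∧
    (∀ L' : Set (List V), prefixClosed L' → ∀ (w : List V) (a : V),
      editDist 1 1 1 1 L' w ≤ editDist 1 1 1 1 L' (w ++ [a])) :=
  ⟨fun L w _ => editDist_mono_of_prefix hmin (prefixClosed_pclose L) (List.prefix_append w _),
    fun _ hL' w _ => editDist_mono_of_prefix (by simp) hL' (List.prefix_append w _)⟩
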